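/- For β > 0 and ρ ∈ [0,1) define G_β(ρ) := ∑_{n≥0} (1/2)_n (β/2)_n / ( ((β+1)/2)_n · n! ) · ρ^{2n}. Then for all β₁ ≥ β₂ > 0 and all ρ ∈ [0,1): G_{β₁}(ρ) / G_{β₂}(ρ) ≤ Γ((β₁+1)/2) Γ(β₂/2) / ( Γ((β₂+1)/2) Γ(β₁/2) ), where Γ is the Gamma function. -/

import Mathlib

/-!
The series are compared term by term. Writing `φ x = Γ x / Γ (x + 1/2)`, the identity
`Γ x · (x)_n = Γ (x + n)` turns the `n`-th coefficient of `G_β` into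
`(1/2)_n / n! · φ (β/2 + n) / φ (β/2)`, while the constant on the right is
`φ (β₂/2) / φ (β₁/2)`. So the claim reduces to `φ (β₁/2 + n) ≤ φ (β₂/2 + n)`, i.e. to `φ` being
antitone, which is the increasing-differences property of the convex function `log ∘ Γ`.
-/

/-- `G_β(ρ) = ∑_{n≥0} (1/2)_n (β/2)_n / (((β+1)/2)_n n!) · ρ^(2n)`
(equal to `₂F₁(1/2, β/2; (β+1)/2; ρ²)`). -/
noncomputable def Gfun (β ρ : ℝ) : ℝ :=
  ∑' n : ℕ,
    (Polynomial.eval (1 / 2 : ℝ) (ascPochhammer ℝ n) *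
        Polynomial.eval (β / 2) (ascPochhammer ℝ n)) /
      (Polynomial.eval ((β + 1) / 2) (ascPochhammer ℝ n) * (n.factorial : ℝ)) * ρ ^ (2 * n)

open Polynomial Set

theorem ConvexOn.add_le_add_of_le {s : Set ℝ} {f : ℝ → ℝ} (hf : ConvexOn ℝ s f) {x y a : ℝ}
    (hx : x ∈ s) (hya : y + a ∈ s) (hxy : x ≤ y) (ha : 0 ≤ a) :
    f y + f (x + a) ≤ f x + f (y + a) := by
  -- `y` and `x + a` are the convex combinations of `x` and `y + a` with weights `(1 - t, t)`
  -- and `(t, 1 - t)`.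
  set t := (y - x) / (y - x + a)
  have ht : t * (y - x + a) = y - x := div_mul_cancel_of_imp fun h => by linarith
  have ht0 : 0 ≤ t := div_nonneg (by linarith) (by linarith)
  have ht1 : t ≤ 1 := div_le_one_of_le₀ (by linarith) (by linarith)
  have hy := hf.2 hx hya (by linarith : 0 ≤ 1 - t) ht0 (sub_add_cancel 1 t)
  have hxa := hf.2 hx hya ht0 (by linarith : 0 ≤ 1 - t) (add_sub_cancel t 1)
  simp only [smul_eq_mul] at hy hxa
  rw [show (1 - t) * x + t * (y + a) = y by linear_combination ht] at hy
  rw [show t * x + (1 - t) * (y + a) = x + a by linear_combination -ht] at hxa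
  linarith

namespace Real

theorem Gamma_mul_Gamma_add_le {x y a : ℝ} (hx : 0 < x) (hxy : x ≤ y) (ha : 0 ≤ a) :
    Gamma y * Gamma (x + a) ≤ Gamma x * Gamma (y + a) := by
  have hya : 0 < y + a := by linarith
  have key := convexOn_log_Gamma.add_le_add_of_le (mem_Ioi.2 hx) (mem_Ioi.2 hya) hxy ha
  simp only [Function.comp_apply] at key
  have hΓy := Gamma_pos_of_pos (hx.trans_le hxy)
  have hΓxa := Gamma_pos_of_pos (by linarith : 0 < x + a)
  have hΓx := Gamma_pos_of_pos hx
  have hΓya := Gamma_pos_of_pos hya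
  rwa [← log_mul hΓy.ne' hΓxa.ne', ← log_mul hΓx.ne' hΓya.ne',
    log_le_log_iff (mul_pos hΓy hΓxa) (mul_pos hΓx hΓya)] at key

theorem antitoneOn_Gamma_div_Gamma_add {a : ℝ} (ha : 0 ≤ a) :
    AntitoneOn (fun x => Gamma x / Gamma (x + a)) (Ioi 0) := by
  intro x hx y _ hxy
  have := Gamma_mul_Gamma_add_le hx hxy ha
  rw [div_le_div_iff₀ (Gamma_pos_of_pos (by linarith [hx.out, hxy]))
    (Gamma_pos_of_pos (by linarith [hx.out]))]
  linarith

theorem Gamma_mul_ascPochhammer_eval {x : ℝ} (hx : 0 < x) (n : ℕ) :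
    Gamma x * (ascPochhammer ℝ n).eval x = Gamma (x + n) := by
  induction n with
  | zero => simp
  | succ n ih =>
    rw [ascPochhammer_succ_eval, ← mul_assoc, ih, Nat.cast_succ, ← add_assoc,
      Gamma_add_one (by positivity)]
    ring

theorem ascPochhammer_eval_div_ascPochhammer_eval_add {x a : ℝ} (hx : 0 < x) (hxa : 0 < x + a)
    (n : ℕ) :
    (ascPochhammer ℝ n).eval x / (ascPochhammer ℝ n).eval (x + a) =
      Gamma (x + n) / Gamma (x + n + a) / (Gamma x / Gamma (x + a)) := by
  rw [add_right_comm, ← Gamma_mul_ascPochhammer_eval hx, ← Gamma_mul_ascPochhammer_eval hxa]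
  have := (Gamma_pos_of_pos hx).ne'
  have := (Gamma_pos_of_pos hxa).ne'
  field_simp

end Real

open Real

theorem tsum_div_tsum_le_of_le_mul {ι : Type*} {f g : ι → ℝ} {c : ℝ} (hf : ∀ i, 0 ≤ f i)
    (hg : ∀ i, 0 ≤ g i) (hc : 0 ≤ c) (hfg : ∀ i, f i ≤ c * g i) :
    (∑' i, f i) / ∑' i, g i ≤ c := by
  by_cases hsum : Summable g
  · refine div_le_of_le_mul₀ (tsum_nonneg hg) hc ?_
    rw [← tsum_mul_left]
    exact (hsum.mul_left c).of_nonneg_of_le hf hfg |>.tsum_le_tsum hfg (hsum.mul_left c)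
  · rw [tsum_eq_zero_of_not_summable hsum, div_zero]
    exact hc

noncomputable def Gcoeff (β : ℝ) (n : ℕ) : ℝ :=
  (eval (1 / 2 : ℝ) (ascPochhammer ℝ n) * eval (β / 2) (ascPochhammer ℝ n)) /
    (eval ((β + 1) / 2) (ascPochhammer ℝ n) * (n.factorial : ℝ))

theorem Gcoeff_nonneg {β : ℝ} (hβ : 0 < β) (n : ℕ) : 0 ≤ Gcoeff β n := by
  unfold Gcoeff
  have := ascPochhammer_pos n (1 / 2 : ℝ) (by norm_num)
  have := ascPochhammer_pos n (β / 2) (by positivity)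
  have := ascPochhammer_pos n ((β + 1) / 2) (by positivity)
  positivity

theorem Gcoeff_eq_mul_div (β : ℝ) (n : ℕ) :
    Gcoeff β n = eval (1 / 2 : ℝ) (ascPochhammer ℝ n) / n.factorial *
      (eval (β / 2) (ascPochhammer ℝ n) / eval (β / 2 + 1 / 2) (ascPochhammer ℝ n)) := by
  rw [Gcoeff, add_div β 1 2, mul_comm (eval _ _) (n.factorial : ℝ), mul_div_mul_comm]

theorem Gcoeff_le_mul {β₁ β₂ : ℝ} (h2 : 0 < β₂) (h21 : β₂ ≤ β₁) (n : ℕ) :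
    Gcoeff β₁ n ≤ Gamma ((β₁ + 1) / 2) * Gamma (β₂ / 2) /
        (Gamma ((β₂ + 1) / 2) * Gamma (β₁ / 2)) * Gcoeff β₂ n := by
  have hx : 0 < β₂ / 2 := by positivity
  have hy : 0 < β₁ / 2 := by linarith
  rw [Gcoeff_eq_mul_div, Gcoeff_eq_mul_div,
    ascPochhammer_eval_div_ascPochhammer_eval_add hx (by positivity),
    ascPochhammer_eval_div_ascPochhammer_eval_add hy (by positivity), add_div β₁ 1 2,
    add_div β₂ 1 2]
  have hφ : Gamma (β₁ / 2 + n) / Gamma (β₁ / 2 + n + 1 / 2) ≤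
      Gamma (β₂ / 2 + n) / Gamma (β₂ / 2 + n + 1 / 2) :=
    antitoneOn_Gamma_div_Gamma_add one_half_pos.le (mem_Ioi.2 (by positivity))
      (mem_Ioi.2 (by positivity)) (by linarith)
  have hk : 0 ≤ eval (1 / 2 : ℝ) (ascPochhammer ℝ n) / n.factorial :=
    div_nonneg (ascPochhammer_pos n _ one_half_pos).le n.factorial.cast_nonneg
  have := (Gamma_pos_of_pos hx).ne'
  have := (Gamma_pos_of_pos hy).ne'
  have := (Gamma_pos_of_pos (by positivity : 0 < β₂ / 2 + 1 / 2)).ne'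
  have := (Gamma_pos_of_pos (by positivity : 0 < β₁ / 2 + 1 / 2)).ne'
  calc _ = eval (1 / 2 : ℝ) (ascPochhammer ℝ n) / n.factorial *
        (Gamma (β₁ / 2 + n) / Gamma (β₁ / 2 + n + 1 / 2)) *
          (Gamma (β₁ / 2 + 1 / 2) / Gamma (β₁ / 2)) := by field_simp
    _ ≤ eval (1 / 2 : ℝ) (ascPochhammer ℝ n) / n.factorial *
        (Gamma (β₂ / 2 + n) / Gamma (β₂ / 2 + n + 1 / 2)) *
          (Gamma (β₁ / 2 + 1 / 2) / Gamma (β₁ / 2)) := by gcongr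
    _ = _ := by field_simp

theorem stmt10_general (β₁ β₂ : ℝ) (h2 : 0 < β₂) (h21 : β₂ ≤ β₁)
    (ρ : ℝ) :
    Gfun β₁ ρ / Gfun β₂ ρ ≤
      Real.Gamma ((β₁ + 1) / 2) * Real.Gamma (β₂ / 2) /
        (Real.Gamma ((β₂ + 1) / 2) * Real.Gamma (β₁ / 2)) := by
  have hρ : ∀ n : ℕ, 0 ≤ ρ ^ (2 * n) := fun n => (even_two_mul n).pow_nonneg ρ
  have h1 : 0 < β₁ := h2.trans_le h21
  refine tsum_div_tsum_le_of_le_mul (fun n => mul_nonneg (Gcoeff_nonneg h1 n) (hρ n))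
    (fun n => mul_nonneg (Gcoeff_nonneg h2 n) (hρ n)) ?_ fun n => ?_
  · positivity
  · rw [← mul_assoc]
    exact mul_le_mul_of_nonneg_right (Gcoeff_le_mul h2 h21 n) (hρ n)

/-- Lemma A.3: for `β₁ ≥ β₂ > 0` and `ρ ∈ [0,1)`,
`G_{β₁}(ρ)/G_{β₂}(ρ) ≤ Γ((β₁+1)/2)Γ(β₂/2) / (Γ((β₂+1)/2)Γ(β₁/2))`. -/
theorem stmt10 (β₁ β₂ : ℝ) (h2 : 0 < β₂) (h21 : β₂ ≤ β₁)
    (ρ : ℝ) (hρ0 : 0 ≤ ρ) (hρ1 : ρ < 1) :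
    Gfun β₁ ρ / Gfun β₂ ρ ≤
      Real.Gamma ((β₁ + 1) / 2) * Real.Gamma (β₂ / 2) /
        (Real.Gamma ((β₂ + 1) / 2) * Real.Gamma (β₁ / 2)) :=
  stmt10_general β₁ β₂ h2 h21 ρ
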